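/- arXiv:2302.03935 — 5 statements merged into one kernel-verified Lean document; each statement's English description precedes it below -/
import Mathlib

section
/- Let X ⊂ Y be nonempty proper subsets of a finite set V with |V| ≥ 3, X ≠ Y, and V \ Y possibly empty excluded (i.e., Y proper). Then there exists a nonnegative edge-weight function c on the complete graph on V such that cut(X) = cut(Y) and cut(X) < cut(Z) for every nonempty proper cut Z ⊆ V with Z ∉ {X, V\X, Y, V\Y}. -/
def cutWeight {V : Type*} [Fintype V] [DecidableEq V] (c : V → V → ℝ) (S : Finset V) : ℝ :=
  ∑ u ∈ S, ∑ v ∈ Sᶜ, c u v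

lemma cutWeight_compl {V : Type*} [Fintype V] [DecidableEq V] (c : V → V → ℝ)
    (hsym : ∀ u v, c u v = c v u) (S : Finset V) :
    cutWeight c S = cutWeight c Sᶜ := by
  unfold cutWeight
  rw [Finset.sum_comm]
  rw [compl_compl]
  exact Finset.sum_congr rfl fun u _ => Finset.sum_congr rfl fun v _ => hsym v u

/-- Adjacency certificate for the cones `K⁺_min(X)` and `K⁺_min(Y)` with `X ⊂ Y` nested
cuts: a nonnegative symmetric weight function for which `X` and `Y` are the two unique
minimum cuts (cuts being identified with their complements). -/
theorem stmt_4 {V : Type*} [Fintype V] [DecidableEq V] (hV : 3 ≤ Fintype.card V)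
    (X Y : Finset V) (hX : X.Nonempty) (hXY : X ⊂ Y) (hY : Yᶜ.Nonempty) :
    ∃ c : V → V → ℝ,
      (∀ u v, 0 ≤ c u v) ∧ (∀ u v, c u v = c v u) ∧ (∀ v, c v v = 0) ∧
      cutWeight c X = cutWeight c Y ∧
      ∀ Z : Finset V, Z.Nonempty → Zᶜ.Nonempty →
        Z ≠ X → Z ≠ Xᶜ → Z ≠ Y → Z ≠ Yᶜ → cutWeight c X < cutWeight c Z := by
  classical
  have hXsubY : X ⊆ Y := hXY.subset
  set B : Finset V := Y \ X with hBdef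
  have hBne : B.Nonempty := by
    obtain ⟨y, hyY, hyX⟩ := Finset.exists_of_ssubset hXY
    exact ⟨y, Finset.mem_sdiff.2 ⟨hyY, hyX⟩⟩
  set a := X.card with hadef
  set b := B.card with hbdef
  set k := Yᶜ.card with hkdef
  have ha : 0 < a := Finset.card_pos.2 hX
  have hb : 0 < b := Finset.card_pos.2 hBne
  have hk : 0 < k := Finset.card_pos.2 hY
  set M : ℝ := (a : ℝ) * b * k + 1 with hMdef
  have habk : (0:ℝ) < (a:ℝ) * b * k := by positivity
  set c : V → V → ℝ := fun u v =>
    if u = v then 0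
    else if (u ∈ X ∧ v ∈ X) ∨ (u ∈ B ∧ v ∈ B) ∨ (u ∉ Y ∧ v ∉ Y) then M
    else if (u ∈ X ∧ v ∈ B) ∨ (v ∈ X ∧ u ∈ B) then (k : ℝ)
    else if (u ∈ B ∧ v ∉ Y) ∨ (v ∈ B ∧ u ∉ Y) then (a : ℝ)
    else 0 with hcdef
  have hM0 : (0:ℝ) ≤ M := by positivity
  have hnonneg : ∀ u v, 0 ≤ c u v := by
    intro u v
    simp only [hcdef]
    split_ifs <;> positivity
  have hsym : ∀ u v, c u v = c v u := by
    intro u v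
    simp only [hcdef]
    exact if_congr eq_comm rfl (if_congr (by tauto) rfl
      (if_congr (by tauto) rfl (if_congr (by tauto) rfl rfl)))
  have hdiag : ∀ v, c v v = 0 := fun v => by simp [hcdef]
  -- pointwise values
  have memB : ∀ {v}, v ∈ B ↔ v ∈ Y ∧ v ∉ X := by
    intro v; simp [hBdef, Finset.mem_sdiff]
  have cXB : ∀ {u v}, u ∈ X → v ∈ B → c u v = (k:ℝ) := by
    intro u v hu hv
    obtain ⟨hvY, hvX⟩ := memB.1 hv
    have hne : u ≠ v := fun h => hvX (h ▸ hu)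
    have huB : u ∉ B := fun h => (memB.1 h).2 hu
    simp only [hcdef]
    rw [if_neg hne, if_neg (by push_neg; exact ⟨fun _ => hvX, fun h => absurd h huB, fun h => absurd hu (fun _ => h (hXsubY hu))⟩), if_pos (Or.inl ⟨hu, hv⟩)]
  have cXC : ∀ {u v}, u ∈ X → v ∉ Y → c u v = 0 := by
    intro u v hu hv
    have huY := hXsubY hu
    have hne : u ≠ v := fun h => hv (h ▸ huY)
    have hvX : v ∉ X := fun h => hv (hXsubY h)
    have hvB : v ∉ B := fun h => hv (memB.1 h).1
    have huB : u ∉ B := fun h => (memB.1 h).2 hu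
    simp only [hcdef]
    rw [if_neg hne, if_neg (by tauto), if_neg (by tauto), if_neg (by tauto)]
  have cBC : ∀ {u v}, u ∈ B → v ∉ Y → c u v = (a:ℝ) := by
    intro u v hu hv
    obtain ⟨huY, huX⟩ := memB.1 hu
    have hne : u ≠ v := fun h => hv (h ▸ huY)
    have hvX : v ∉ X := fun h => hv (hXsubY h)
    have hvB : v ∉ B := fun h => hv (memB.1 h).1
    simp only [hcdef]
    rw [if_neg hne, if_neg (by tauto), if_neg (by tauto), if_pos (Or.inl ⟨hu, hv⟩)]
  have cSame : ∀ {u v}, u ≠ v →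
      ((u ∈ X ∧ v ∈ X) ∨ (u ∈ B ∧ v ∈ B) ∨ (u ∉ Y ∧ v ∉ Y)) → c u v = M := by
    intro u v hne h
    simp only [hcdef]
    rw [if_neg hne, if_pos h]
  -- decompositions
  have hXc : Xᶜ = B ∪ Yᶜ := by
    ext v
    simp only [Finset.mem_compl, Finset.mem_union, memB]
    constructor
    · intro h; by_cases hv : v ∈ Y
      · exact Or.inl ⟨hv, h⟩
      · exact Or.inr hv
    · rintro (⟨_, h⟩ | h)
      · exact h
      · exact fun hx => h (hXsubY hx)
  have hdisjBY : Disjoint B Yᶜ := by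
    rw [Finset.disjoint_left]
    intro v hv hv'
    exact (Finset.mem_compl.1 hv') (memB.1 hv).1
  have hYeq : Y = X ∪ B := by
    ext v
    simp only [Finset.mem_union, memB]
    constructor
    · intro h; by_cases hv : v ∈ X
      · exact Or.inl hv
      · exact Or.inr ⟨h, hv⟩
    · rintro (h | ⟨h, _⟩)
      · exact hXsubY h
      · exact h
  have hdisjXB : Disjoint X B := by
    rw [Finset.disjoint_left]
    intro v hv hv'
    exact (memB.1 hv').2 hv
  -- cut of X
  have cutX : cutWeight c X = (a:ℝ) * b * k := by
    unfold cutWeight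
    rw [hXc]
    have : ∀ u ∈ X, (∑ v ∈ B ∪ Yᶜ, c u v) = (b:ℝ) * k := by
      intro u hu
      rw [Finset.sum_union hdisjBY]
      rw [Finset.sum_congr rfl (fun v hv => cXB hu hv),
          Finset.sum_congr rfl (fun v hv => cXC hu (Finset.mem_compl.1 hv))]
      simp [hbdef, mul_comm]
    rw [Finset.sum_congr rfl this]
    simp [hadef]; ring
  have cutY : cutWeight c Y = (a:ℝ) * b * k := by
    have hsplitY : cutWeight c Y =
        (∑ u ∈ X, ∑ v ∈ Yᶜ, c u v) + ∑ u ∈ B, ∑ v ∈ Yᶜ, c u v := by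
      unfold cutWeight
      rw [← Finset.sum_union hdisjXB, ← hYeq]
    rw [hsplitY]
    have h1 : ∀ u ∈ X, (∑ v ∈ Yᶜ, c u v) = 0 := by
      intro u hu
      rw [Finset.sum_congr rfl (fun v hv => cXC hu (Finset.mem_compl.1 hv))]
      simp
    have h2 : ∀ u ∈ B, (∑ v ∈ Yᶜ, c u v) = (k:ℝ) * a := by
      intro u hu
      rw [Finset.sum_congr rfl (fun v hv => cBC hu (Finset.mem_compl.1 hv))]
      simp [hkdef, mul_comm]
    rw [Finset.sum_congr rfl h1, Finset.sum_congr rfl h2]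
    simp [hbdef]; ring
  have hBc : Bᶜ = X ∪ Yᶜ := by
    ext v
    simp only [Finset.mem_compl, Finset.mem_union, memB]
    constructor
    · intro h
      by_cases hv : v ∈ Y
      · exact Or.inl (by by_contra hx; exact h ⟨hv, hx⟩)
      · exact Or.inr hv
    · rintro (h | h) ⟨h1, h2⟩
      · exact h2 h
      · exact h h1
  have hdisjXY : Disjoint X Yᶜ := by
    rw [Finset.disjoint_left]
    intro v hv hv'
    exact (Finset.mem_compl.1 hv') (hXsubY hv)
  have cutB : cutWeight c B = 2 * ((a:ℝ) * b * k) := by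
    unfold cutWeight
    rw [hBc]
    have : ∀ u ∈ B, (∑ v ∈ X ∪ Yᶜ, c u v) = (a:ℝ) * k + (k:ℝ) * a := by
      intro u hu
      rw [Finset.sum_union hdisjXY]
      rw [Finset.sum_congr rfl (fun v hv => (hsym u v).trans (cXB hv hu)),
          Finset.sum_congr rfl (fun v hv => cBC hu (Finset.mem_compl.1 hv))]
      simp [hadef, hkdef, mul_comm]
    rw [Finset.sum_congr rfl this]
    simp [hbdef]; ring
  refine ⟨c, hnonneg, hsym, hdiag, by rw [cutX, cutY], ?_⟩
  intro Z hZ hZc hZX hZXc hZY hZYc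
  rw [cutX]
  by_cases hsplit : ∃ u v, ((u ∈ X ∧ v ∈ X) ∨ (u ∈ B ∧ v ∈ B) ∨ (u ∉ Y ∧ v ∉ Y)) ∧
      u ∈ Z ∧ v ∈ Zᶜ
  · obtain ⟨u, v, hblk, huZ, hvZ⟩ := hsplit
    have hne : u ≠ v := fun h => (Finset.mem_compl.1 hvZ) (h ▸ huZ)
    have hcM : c u v = M := cSame hne hblk
    have h1 : c u v ≤ ∑ w ∈ Zᶜ, c u w :=
      Finset.single_le_sum (fun w _ => hnonneg u w) hvZ
    have h2 : (∑ w ∈ Zᶜ, c u w) ≤ cutWeight c Z :=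
      Finset.single_le_sum (fun w _ => Finset.sum_nonneg fun x _ => hnonneg w x) huZ
    have : M ≤ cutWeight c Z := hcM ▸ h1.trans h2
    calc (a:ℝ) * b * k < M := by rw [hMdef]; linarith
      _ ≤ cutWeight c Z := this
  · push_neg at hsplit
    have key : ∀ u v, ((u ∈ X ∧ v ∈ X) ∨ (u ∈ B ∧ v ∈ B) ∨ (u ∉ Y ∧ v ∉ Y)) →
        u ∈ Z → v ∈ Z := by
      intro u v hblk hu
      by_contra hv
      exact (hsplit u v hblk hu) (Finset.mem_compl.2 hv)
    -- each block is inside or disjoint from Z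
    have hZB : Z = B ∨ Z = Bᶜ := by
      by_cases hA : ∃ u ∈ X, u ∈ Z
      · obtain ⟨u0, hu0X, hu0Z⟩ := hA
        have hXZ : X ⊆ Z := fun v hv => key u0 v (Or.inl ⟨hu0X, hv⟩) hu0Z
        by_cases hB2 : ∃ u ∈ B, u ∈ Z
        · obtain ⟨u1, hu1B, hu1Z⟩ := hB2
          have hBZ : B ⊆ Z := fun v hv => key u1 v (Or.inr (Or.inl ⟨hu1B, hv⟩)) hu1Z
          by_cases hC : ∃ u ∉ Y, u ∈ Z
          · -- Z = univ, contradiction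
            obtain ⟨u2, hu2Y, hu2Z⟩ := hC
            have hCZ : ∀ v, v ∉ Y → v ∈ Z := fun v hv =>
              key u2 v (Or.inr (Or.inr ⟨hu2Y, hv⟩)) hu2Z
            obtain ⟨w, hw⟩ := hZc
            have hwZ := Finset.mem_compl.1 hw
            by_cases hwY : w ∈ Y
            · rcases Finset.mem_union.1 (hYeq ▸ hwY) with h | h
              · exact absurd (hXZ h) hwZ
              · exact absurd (hBZ h) hwZ
            · exact absurd (hCZ w hwY) hwZ
          · -- Z = Y, contradiction
            push_neg at hC
            exfalso; apply hZY
            ext v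
            constructor
            · intro hv
              by_contra hvY
              exact hvY ((em (v ∈ Y)).elim id (fun h => absurd hv (by simpa using hC v h)))
            · intro hv
              rcases Finset.mem_union.1 (hYeq ▸ hv) with h | h
              · exact hXZ h
              · exact hBZ h
        · push_neg at hB2
          by_cases hC : ∃ u ∉ Y, u ∈ Z
          · -- Z = X ∪ Yᶜ = Bᶜ
            obtain ⟨u2, hu2Y, hu2Z⟩ := hC
            have hCZ : ∀ v, v ∉ Y → v ∈ Z := fun v hv =>
              key u2 v (Or.inr (Or.inr ⟨hu2Y, hv⟩)) hu2Z
            right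
            ext v
            rw [hBc, Finset.mem_union]
            constructor
            · intro hv
              by_cases hvY : v ∈ Y
              · rcases Finset.mem_union.1 (hYeq ▸ hvY) with h | h
                · exact Or.inl h
                · exact absurd hv (hB2 v h)
              · exact Or.inr (Finset.mem_compl.2 hvY)
            · rintro (h | h)
              · exact hXZ h
              · exact hCZ v (Finset.mem_compl.1 h)
          · -- Z = X, contradiction
            push_neg at hC
            exfalso; apply hZX
            ext v
            constructor
            · intro hv
              by_cases hvY : v ∈ Y
              · rcases Finset.mem_union.1 (hYeq ▸ hvY) with h | h
                · exact h
                · exact absurd hv (hB2 v h)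
              · exact absurd hv (by simpa using hC v hvY)
            · exact fun hv => hXZ hv
      · push_neg at hA
        by_cases hB2 : ∃ u ∈ B, u ∈ Z
        · obtain ⟨u1, hu1B, hu1Z⟩ := hB2
          have hBZ : B ⊆ Z := fun v hv => key u1 v (Or.inr (Or.inl ⟨hu1B, hv⟩)) hu1Z
          by_cases hC : ∃ u ∉ Y, u ∈ Z
          · -- Z = B ∪ Yᶜ = Xᶜ, contradiction
            obtain ⟨u2, hu2Y, hu2Z⟩ := hC
            have hCZ : ∀ v, v ∉ Y → v ∈ Z := fun v hv =>
              key u2 v (Or.inr (Or.inr ⟨hu2Y, hv⟩)) hu2Z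
            exfalso; apply hZXc
            ext v
            rw [hXc, Finset.mem_union]
            constructor
            · intro hv
              by_cases hvY : v ∈ Y
              · rcases Finset.mem_union.1 (hYeq ▸ hvY) with h | h
                · exact absurd hv (hA v h)
                · exact Or.inl h
              · exact Or.inr (Finset.mem_compl.2 hvY)
            · rintro (h | h)
              · exact hBZ h
              · exact hCZ v (Finset.mem_compl.1 h)
          · -- Z = B
            push_neg at hC
            left
            ext v
            constructor
            · intro hv
              by_cases hvY : v ∈ Y
              · rcases Finset.mem_union.1 (hYeq ▸ hvY) with h | h
                · exact absurd hv (hA v h)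
                · exact h
              · exact absurd hv (by simpa using hC v hvY)
            · exact fun hv => hBZ hv
        · push_neg at hB2
          by_cases hC : ∃ u ∉ Y, u ∈ Z
          · -- Z = Yᶜ, contradiction
            obtain ⟨u2, hu2Y, hu2Z⟩ := hC
            have hCZ : ∀ v, v ∉ Y → v ∈ Z := fun v hv =>
              key u2 v (Or.inr (Or.inr ⟨hu2Y, hv⟩)) hu2Z
            exfalso; apply hZYc
            ext v
            rw [Finset.mem_compl]
            constructor
            · intro hv
              intro hvY
              rcases Finset.mem_union.1 (hYeq ▸ hvY) with h | h
              · exact (hA v h) hv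
              · exact (hB2 v h) hv
            · exact fun hv => hCZ v hv
          · -- Z = ∅, contradiction
            push_neg at hC
            exfalso
            obtain ⟨z, hz⟩ := hZ
            by_cases hzY : z ∈ Y
            · rcases Finset.mem_union.1 (hYeq ▸ hzY) with h | h
              · exact (hA z h) hz
              · exact (hB2 z h) hz
            · exact (by simpa using hC z hzY : z ∉ Z) hz
    rcases hZB with rfl | rfl
    · rw [cutB]; linarith
    · rw [← cutWeight_compl c hsym B, cutB]; linarith
end

section
/- Let X and Y be crossing nonempty proper subsets of a finite set V. Then there exists a nonnegative edge-weight function c on the complete graph on V such that cut(X) = cut(Y) and cut(Z) < cut(X) for every nonempty proper subset Z ⊆ V with Z ∉ {X, V\X, Y, V\Y}. -/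
def Crossing {V : Type*} [Fintype V] [DecidableEq V] (A B : Finset V) : Prop :=
  (A ∩ B).Nonempty ∧ (A \ B).Nonempty ∧ (B \ A).Nonempty ∧ (A ∪ B)ᶜ.Nonempty

lemma sum_ind {V : Type*} [DecidableEq V] (S T : Finset V) :
    ∑ v ∈ S, (if v ∈ T then (1:ℝ) else 0) = (S ∩ T).card := by
  simp [Finset.sum_boole, Finset.filter_mem_eq_inter]

lemma key_nat (a d α α' δ δ' : ℕ) (h1 : α + α' = a) (h2 : δ + δ' = d) :
    α * δ' + α' * δ + (α * δ + α' * δ') = a * d := by subst h1 h2; ring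

/-- Adjacency certificate for the cones `K⁺_max(X)` and `K⁺_max(Y)` for crossing cuts
`X`, `Y`: a nonnegative weight function for which `X` and `Y` are the two unique maximum
cuts (cuts being identified with their complements). -/
theorem stmt_5 {V : Type*} [Fintype V] [DecidableEq V]
    (X Y : Finset V) (hX : X.Nonempty) (hX' : Xᶜ.Nonempty)
    (hY : Y.Nonempty) (hY' : Yᶜ.Nonempty) (hcross : Crossing X Y) :
    ∃ c : V → V → ℝ,
      (∀ u v, 0 ≤ c u v) ∧ (∀ u v, c u v = c v u) ∧ (∀ v, c v v = 0) ∧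
      cutWeight c X = cutWeight c Y ∧
      ∀ Z : Finset V, Z.Nonempty → Zᶜ.Nonempty →
        Z ≠ X → Z ≠ Xᶜ → Z ≠ Y → Z ≠ Yᶜ → cutWeight c Z < cutWeight c X := by
  classical
  obtain ⟨hA, hB, hC, hD⟩ := hcross
  set A : Finset V := X ∩ Y with hAdef
  set B : Finset V := X \ Y with hBdef
  set C : Finset V := Y \ X with hCdef
  set D : Finset V := (X ∪ Y)ᶜ with hDdef
  have hAD : ∀ v : V, v ∈ A → v ∉ D := by
    intro v hv; simp [hAdef, hDdef] at *; tauto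
  have hBC : ∀ v : V, v ∈ B → v ∉ C := by
    intro v hv; simp [hBdef, hCdef] at *; tauto
  have hcover : ∀ v : V, v ∈ A ∨ v ∈ B ∨ v ∈ C ∨ v ∈ D := by
    intro v; simp [hAdef, hBdef, hCdef, hDdef]; tauto
  set c : V → V → ℝ := fun u v =>
    (if u ∈ A then (1:ℝ) else 0) * (if v ∈ D then 1 else 0)
    + (if u ∈ D then (1:ℝ) else 0) * (if v ∈ A then 1 else 0)
    + (if u ∈ B then (1:ℝ) else 0) * (if v ∈ C then 1 else 0)
    + (if u ∈ C then (1:ℝ) else 0) * (if v ∈ B then 1 else 0) with hcdef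
  have hcut : ∀ Z : Finset V, cutWeight c Z =
      ((Z ∩ A).card : ℝ) * (Zᶜ ∩ D).card + ((Z ∩ D).card : ℝ) * (Zᶜ ∩ A).card
      + ((Z ∩ B).card : ℝ) * (Zᶜ ∩ C).card + ((Z ∩ C).card : ℝ) * (Zᶜ ∩ B).card := by
    intro Z
    unfold cutWeight
    simp only [hcdef, Finset.sum_add_distrib, ← Finset.mul_sum, sum_ind,
      ← Finset.sum_mul]
  have e1 : X ∩ A = A := by rw [hAdef]; ext v; simp; try tauto
  have e2 : Xᶜ ∩ D = D := by rw [hDdef]; ext v; simp; try tauto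
  have e3 : X ∩ D = ∅ := by rw [hDdef]; ext v; simp; try tauto
  have e4 : Xᶜ ∩ A = ∅ := by rw [hAdef]; ext v; simp; try tauto
  have e5 : X ∩ B = B := by rw [hBdef]; ext v; simp; try tauto
  have e6 : Xᶜ ∩ C = C := by rw [hCdef]; ext v; simp; try tauto
  have e7 : X ∩ C = ∅ := by rw [hCdef]; ext v; simp; try tauto
  have e8 : Xᶜ ∩ B = ∅ := by rw [hBdef]; ext v; simp; try tauto
  have hXval : cutWeight c X = (A.card : ℝ) * D.card + (B.card : ℝ) * C.card := by
    rw [hcut, e1, e2, e3, e4, e5, e6, e7, e8]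
    simp
  refine ⟨c, ?_, ?_, ?_, ?_, ?_⟩
  · intro u v; rw [hcdef]; positivity
  · intro u v; rw [hcdef]; ring
  · intro v
    rw [hcdef]
    by_cases h1 : v ∈ A <;> by_cases h2 : v ∈ B <;>
      simp [h1, h2, hAD v, hBC v]
  · -- cut X = cut Y
    have f1 : Y ∩ A = A := by rw [hAdef]; ext v; simp; try tauto
    have f2 : Yᶜ ∩ D = D := by rw [hDdef]; ext v; simp; try tauto
    have f3 : Y ∩ D = ∅ := by rw [hDdef]; ext v; simp; try tauto
    have f4 : Yᶜ ∩ A = ∅ := by rw [hAdef]; ext v; simp; try tauto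
    have f5 : Y ∩ C = C := by rw [hCdef]; ext v; simp; try tauto
    have f6 : Yᶜ ∩ B = B := by rw [hBdef]; ext v; simp; try tauto
    have f7 : Y ∩ B = ∅ := by rw [hBdef]; ext v; simp; try tauto
    have f8 : Yᶜ ∩ C = ∅ := by rw [hCdef]; ext v; simp; try tauto
    rw [hXval, hcut, f1, f2, f3, f4, f5, f6, f7, f8]
    simp
    ring
  · -- strict maximality
    intro Z hZ hZ' hne1 hne2 hne3 hne4
    have hsplit : ∀ S : Finset V, (Z ∩ S).card + (Zᶜ ∩ S).card = S.card := by
      intro S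
      have h1 : Z ∩ S = S ∩ Z := Finset.inter_comm _ _
      have h2 : Zᶜ ∩ S = S \ Z := by ext v; simp; try tauto
      rw [h1, h2, Finset.card_inter_add_card_sdiff]
    have ha : 0 < A.card := Finset.card_pos.mpr hA
    have hb : 0 < B.card := Finset.card_pos.mpr hB
    have hc : 0 < C.card := Finset.card_pos.mpr hC
    have hd : 0 < D.card := Finset.card_pos.mpr hD
    set α := (Z ∩ A).card with hα
    set α' := (Zᶜ ∩ A).card with hα'
    set δ := (Z ∩ D).card with hδ
    set δ' := (Zᶜ ∩ D).card with hδ'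
    set β := (Z ∩ B).card with hβ
    set β' := (Zᶜ ∩ B).card with hβ'
    set γ := (Z ∩ C).card with hγ
    set γ' := (Zᶜ ∩ C).card with hγ'
    have hXmem : ∀ v : V, v ∈ X ↔ (v ∈ A ∨ v ∈ B) := by
      intro v
      simp only [hAdef, hBdef, Finset.mem_inter, Finset.mem_sdiff, Finset.mem_compl,
        Finset.mem_union]
      tauto
    have hYmem : ∀ v : V, v ∈ Y ↔ (v ∈ A ∨ v ∈ C) := by
      intro v
      simp only [hAdef, hCdef, Finset.mem_inter, Finset.mem_sdiff, Finset.mem_compl,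
        Finset.mem_union]
      tauto
    have hXcmem : ∀ v : V, v ∈ Xᶜ ↔ (v ∈ C ∨ v ∈ D) := by
      intro v
      simp only [hCdef, hDdef, Finset.mem_inter, Finset.mem_sdiff, Finset.mem_compl,
        Finset.mem_union]
      tauto
    have hYcmem : ∀ v : V, v ∈ Yᶜ ↔ (v ∈ B ∨ v ∈ D) := by
      intro v
      simp only [hBdef, hDdef, Finset.mem_inter, Finset.mem_sdiff, Finset.mem_compl,
        Finset.mem_union]
      tauto
    have hmem : ∀ (S : Finset V), (Z ∩ S).card = 0 → ∀ v ∈ S, v ∉ Z := by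
      intro S h v hv hvZ
      have hm : v ∈ Z ∩ S := Finset.mem_inter.mpr ⟨hvZ, hv⟩
      rw [Finset.card_eq_zero.mp h] at hm
      exact absurd hm (Finset.notMem_empty v)
    have hmem' : ∀ (S : Finset V), (Zᶜ ∩ S).card = 0 → ∀ v ∈ S, v ∈ Z := by
      intro S h v hv
      by_contra hvZ
      have hm : v ∈ Zᶜ ∩ S := Finset.mem_inter.mpr ⟨Finset.mem_compl.mpr hvZ, hv⟩
      rw [Finset.card_eq_zero.mp h] at hm
      exact absurd hm (Finset.notMem_empty v)
    -- strict positivity of the slack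
    have hpos : 0 < α * δ + α' * δ' + (β * γ + β' * γ') := by
      rcases Nat.eq_zero_or_pos (α * δ + α' * δ' + (β * γ + β' * γ')) with h0 | h
      · exfalso
        have e1 : α * δ = 0 := by omega
        have e2 : α' * δ' = 0 := by omega
        have e3 : β * γ = 0 := by omega
        have e4 : β' * γ' = 0 := by omega
        have hAcase : (∀ v ∈ A, v ∈ Z) ∧ (∀ v ∈ D, v ∉ Z) ∨
            (∀ v ∈ A, v ∉ Z) ∧ (∀ v ∈ D, v ∈ Z) := by
          rcases Nat.mul_eq_zero.mp e1 with h1 | h1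
          · right
            have hα0 : α' = A.card := by have := hsplit A; omega
            have hδ0 : δ' = 0 := by
              rcases Nat.mul_eq_zero.mp e2 with h2 | h2
              · omega
              · exact h2
            exact ⟨hmem A h1, hmem' D hδ0⟩
          · left
            have hδ0 : δ' = D.card := by have := hsplit D; omega
            have hα0 : α' = 0 := by
              rcases Nat.mul_eq_zero.mp e2 with h2 | h2
              · exact h2
              · omega
            exact ⟨hmem' A hα0, hmem D h1⟩
        have hBcase : (∀ v ∈ B, v ∈ Z) ∧ (∀ v ∈ C, v ∉ Z) ∨
            (∀ v ∈ B, v ∉ Z) ∧ (∀ v ∈ C, v ∈ Z) := by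
          rcases Nat.mul_eq_zero.mp e3 with h1 | h1
          · right
            have hβ0 : β' = B.card := by have := hsplit B; omega
            have hγ0 : γ' = 0 := by
              rcases Nat.mul_eq_zero.mp e4 with h2 | h2
              · omega
              · exact h2
            exact ⟨hmem B h1, hmem' C hγ0⟩
          · left
            have hγ0 : γ' = C.card := by have := hsplit C; omega
            have hβ0 : β' = 0 := by
              rcases Nat.mul_eq_zero.mp e4 with h2 | h2
              · exact h2
              · omega
            exact ⟨hmem' B hβ0, hmem C h1⟩
        rcases hAcase with ⟨pA, pD⟩ | ⟨pA, pD⟩ <;> rcases hBcase with ⟨pB, pC⟩ | ⟨pB, pC⟩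
        · apply hne1; ext v; rw [hXmem v]
          constructor
          · intro hv
            rcases hcover v with h | h | h | h
            · exact Or.inl h
            · exact Or.inr h
            · exact absurd hv (pC v h)
            · exact absurd hv (pD v h)
          · rintro (h | h)
            · exact pA v h
            · exact pB v h
        · apply hne3; ext v; rw [hYmem v]
          constructor
          · intro hv
            rcases hcover v with h | h | h | h
            · exact Or.inl h
            · exact absurd hv (pB v h)
            · exact Or.inr h
            · exact absurd hv (pD v h)
          · rintro (h | h)
            · exact pA v h
            · exact pC v h
        · apply hne4; ext v; rw [hYcmem v]
          constructor
          · intro hv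
            rcases hcover v with h | h | h | h
            · exact absurd hv (pA v h)
            · exact Or.inl h
            · exact absurd hv (pC v h)
            · exact Or.inr h
          · rintro (h | h)
            · exact pB v h
            · exact pD v h
        · apply hne2; ext v; rw [hXcmem v]
          constructor
          · intro hv
            rcases hcover v with h | h | h | h
            · exact absurd hv (pA v h)
            · exact absurd hv (pB v h)
            · exact Or.inl h
            · exact Or.inr h
          · rintro (h | h)
            · exact pC v h
            · exact pD v h
      · exact h
    have k1 := key_nat A.card D.card α α' δ δ' (hsplit A) (hsplit D)
    have k2 := key_nat B.card C.card β β' γ γ' (hsplit B) (hsplit C)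
    have hnatlt : α * δ' + δ * α' + β * γ' + γ * β' <
        A.card * D.card + B.card * C.card := by
      have hsum : α * δ' + δ * α' + β * γ' + γ * β'
          + (α * δ + α' * δ' + (β * γ + β' * γ'))
          = A.card * D.card + B.card * C.card := by
        rw [← k1, ← k2]; ring
      calc α * δ' + δ * α' + β * γ' + γ * β'
          < α * δ' + δ * α' + β * γ' + γ * β'
            + (α * δ + α' * δ' + (β * γ + β' * γ')) := Nat.lt_add_of_pos_right hpos
        _ = _ := hsum
    rw [hcut Z, hXval]
    push_cast
    exact_mod_cast hnatlt
end

section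
/- Let X ⊂ Y be nonempty proper subsets of a finite set V with |Y \ X| = 1. Then there exists a nonnegative edge-weight function c on the complete graph on V such that cut(X) = cut(Y) and cut(Z) < cut(X) for every nonempty proper subset Z with Z ∉ {X, V\X, Y, V\Y}. -/
lemma cut_count {V : Type*} [Fintype V] [DecidableEq V] (S T Z : Finset V) :
    (∑ u ∈ Z, ∑ v ∈ Zᶜ, (if u ∈ S ∧ v ∈ T then (1:ℝ) else 0))
      = (Z ∩ S).card * (Zᶜ ∩ T).card := by
  have h : ∀ u v : V, (if u ∈ S ∧ v ∈ T then (1:ℝ) else 0)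
      = (if u ∈ S then (1:ℝ) else 0) * (if v ∈ T then (1:ℝ) else 0) := by
    intro u v; by_cases h1 : u ∈ S <;> by_cases h2 : v ∈ T <;> simp [h1, h2]
  simp_rw [h, ← Finset.mul_sum, ← Finset.sum_mul, Finset.sum_boole,
    Finset.filter_mem_eq_inter]

lemma sandwich {V : Type*} [Fintype V] [DecidableEq V] {X Y Z : Finset V}
    (hXY : X ⊆ Y) (hdiff : (Y \ X).card = 1) (h1 : X ⊆ Z) (h2 : Z ⊆ Y) :
    Z = X ∨ Z = Y := by
  by_cases hzx : Z = X
  · exact Or.inl hzx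
  · right
    have hcard : X.card + 1 = Y.card := by
      have := Finset.card_sdiff_add_card_eq_card hXY
      omega
    have hlt : X.card < Z.card := Finset.card_lt_card (lt_of_le_of_ne h1 (Ne.symm hzx))
    have hle : Z.card ≤ Y.card := Finset.card_le_card h2
    exact Finset.eq_of_subset_of_card_le h2 (by omega)

/-- Adjacency certificate for the cones `K⁺_max(X)` and `K⁺_max(Y)` for nested cuts with
`|Y \ X| = 1`. -/
theorem stmt_6 {V : Type*} [Fintype V] [DecidableEq V]
    (X Y : Finset V) (hX : X.Nonempty) (hXY : X ⊂ Y) (hY : Yᶜ.Nonempty)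
    (hdiff : (Y \ X).card = 1) :
    ∃ c : V → V → ℝ,
      (∀ u v, 0 ≤ c u v) ∧ (∀ u v, c u v = c v u) ∧ (∀ v, c v v = 0) ∧
      cutWeight c X = cutWeight c Y ∧
      ∀ Z : Finset V, Z.Nonempty → Zᶜ.Nonempty →
        Z ≠ X → Z ≠ Xᶜ → Z ≠ Y → Z ≠ Yᶜ → cutWeight c Z < cutWeight c X := by
  classical
  have hXsubY : X ⊆ Y := hXY.subset
  have hdisj : ∀ v : V, ¬ (v ∈ X ∧ v ∈ Yᶜ) := by
    rintro v ⟨hv1, hv2⟩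
    exact (Finset.mem_compl.mp hv2) (hXsubY hv1)
  have key : ∀ Z : Finset V,
      cutWeight (fun u v =>
        (if u ∈ X ∧ v ∈ Yᶜ then (1:ℝ) else 0) + (if u ∈ Yᶜ ∧ v ∈ X then 1 else 0)) Z
        = (Z ∩ X).card * (Zᶜ ∩ Yᶜ).card + (Z ∩ Yᶜ).card * (Zᶜ ∩ X).card := by
    intro Z
    unfold cutWeight
    simp_rw [Finset.sum_add_distrib]
    rw [cut_count, cut_count]
  have hXc : Yᶜ ⊆ Xᶜ := Finset.compl_subset_compl.mpr hXsubY
  have hXYe : X ∩ Yᶜ = ∅ := by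
    rw [Finset.eq_empty_iff_forall_notMem]
    intro x hx
    exact hdisj x (Finset.mem_inter.mp hx)
  have cutX : cutWeight (fun u v =>
        (if u ∈ X ∧ v ∈ Yᶜ then (1:ℝ) else 0) + (if u ∈ Yᶜ ∧ v ∈ X then 1 else 0)) X
      = X.card * Yᶜ.card := by
    rw [key, Finset.inter_self, Finset.inter_eq_right.mpr hXc, hXYe]
    simp
  refine ⟨fun u v =>
    (if u ∈ X ∧ v ∈ Yᶜ then 1 else 0) + (if u ∈ Yᶜ ∧ v ∈ X then 1 else 0),
    ?_, ?_, ?_, ?_, ?_⟩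
  · intro u v; positivity
  · intro u v
    by_cases h1 : u ∈ X <;> by_cases h2 : v ∈ X <;> by_cases h3 : u ∈ Yᶜ <;>
      by_cases h4 : v ∈ Yᶜ <;> simp [h1, h2, h3, h4]
  · intro v
    by_cases hx : v ∈ X
    · have hy : v ∉ Yᶜ := fun hy => hdisj v ⟨hx, hy⟩
      simp [hx, hy]
    · simp [hx]
  case _ =>
    have hcompl : Y ∩ Yᶜ = ∅ := by ext x; simp
    rw [cutX, key, Finset.inter_eq_right.mpr hXsubY, Finset.inter_self, hcompl]
    simp
  case _ =>
    intro Z hZ hZc h1 h2 h3 h4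
    rw [cutX, key]
    have eq1 : Z ∩ X = X ∩ Z := Finset.inter_comm _ _
    have eq2 : Zᶜ ∩ X = X \ Z := by ext x; simp [and_comm]
    have eq3 : Z ∩ Yᶜ = Yᶜ ∩ Z := Finset.inter_comm _ _
    have eq4 : Zᶜ ∩ Yᶜ = Yᶜ \ Z := by ext x; simp [and_comm]
    rw [eq1, eq2, eq3, eq4]
    set a := (X ∩ Z).card with ha0
    set a' := (X \ Z).card with ha0'
    set b := (Yᶜ ∩ Z).card with hb0
    set b' := (Yᶜ \ Z).card with hb0'
    have ha : a + a' = X.card := Finset.card_inter_add_card_sdiff X Z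
    have hb : b + b' = Yᶜ.card := Finset.card_inter_add_card_sdiff Yᶜ Z
    have hsub : ∀ {A B : Finset V}, A ∩ B = ∅ → A ⊆ Bᶜ := by
      intro A B h x hx
      rw [Finset.mem_compl]
      intro hxB
      exact (Finset.notMem_empty x) (h ▸ Finset.mem_inter.mpr ⟨hx, hxB⟩)
    have hpos : 0 < a * b + a' * b' := by
      rcases Nat.eq_zero_or_pos (a * b + a' * b') with h0 | h0
      · exfalso
        have hab : a * b = 0 := by omega
        have hab' : a' * b' = 0 := by omega
        rcases Nat.mul_eq_zero.mp hab with hA | hB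
        · rcases Nat.mul_eq_zero.mp hab' with hA' | hB'
          · -- X empty
            have : X = ∅ := Finset.card_eq_zero.mp (by omega)
            exact hX.ne_empty this
          · -- X ⊆ Zᶜ, Zᶜ ⊆ Y
            have hXZc : X ⊆ Zᶜ := hsub (Finset.card_eq_zero.mp hA)
            have hYZ : Yᶜ ⊆ Z := Finset.sdiff_eq_empty_iff_subset.mp
              (Finset.card_eq_zero.mp hB')
            have hZcY : Zᶜ ⊆ Y := by
              intro x hx
              by_contra hxY
              exact (Finset.mem_compl.mp hx) (hYZ (Finset.mem_compl.mpr hxY))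
            rcases sandwich hXsubY hdiff hXZc hZcY with h | h
            · exact h2 (by rw [← h, compl_compl])
            · exact h4 (by rw [← h, compl_compl])
        · rcases Nat.mul_eq_zero.mp hab' with hA' | hB'
          · -- X ⊆ Z, Z ⊆ Y
            have hXZ : X ⊆ Z := Finset.sdiff_eq_empty_iff_subset.mp
              (Finset.card_eq_zero.mp hA')
            have hZY : Z ⊆ Y := by
              have := hsub (Finset.card_eq_zero.mp hB)
              intro x hx
              by_contra hxY
              exact (Finset.mem_compl.mp (this (Finset.mem_compl.mpr hxY))) hx
            rcases sandwich hXsubY hdiff hXZ hZY with h | h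
            · exact h1 h
            · exact h3 h
          · -- Yᶜ empty
            have : Yᶜ = ∅ := Finset.card_eq_zero.mp (by omega)
            exact hY.ne_empty this
      · exact h0
    have hnat : a * b' + b * a' < X.card * Yᶜ.card := by
      have hid : X.card * Yᶜ.card = a * b' + b * a' + (a * b + a' * b') := by
        rw [← ha, ← hb]; ring
      omega
    exact_mod_cast hnat
end

section
/- Let X ⊂ Y be subsets of a finite set V with |Y \ X| ≥ 2. For any partition of Y \ X into nonempty sets A and B, and any nonnegative edge weights c with cut(X) = cut(Y), at least one of cut(X ∪ A), cut(X ∪ B) satisfies cut(X ∪ A) ≥ cut(X) or cut(X ∪ B) ≥ cut(X). Hence there is no c with cut(X) = cut(Y) strictly greater than all other cut values. -/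
lemma cut_eq {V : Type*} [Fintype V] [DecidableEq V] (c : V → V → ℝ) (S : Finset V) :
    cutWeight c S = ∑ u : V, ∑ v : V, if u ∈ S ∧ v ∉ S then c u v else 0 := by
  unfold cutWeight
  have : ∀ u : V, (∑ v : V, if u ∈ S ∧ v ∉ S then c u v else 0)
      = if u ∈ S then ∑ v ∈ Sᶜ, c u v else 0 := by
    intro u
    by_cases hu : u ∈ S
    · simp only [hu, true_and, if_true]
      rw [← Finset.sum_filter]
      congr 1
      ext v; simp
    · simp [hu]
  rw [Finset.sum_congr rfl (fun u _ => this u), Finset.sum_ite_mem, Finset.univ_inter]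

lemma cut_submod {V : Type*} [Fintype V] [DecidableEq V] (c : V → V → ℝ)
    (hc : ∀ u v, 0 ≤ c u v) (S T : Finset V) :
    cutWeight c (S ∩ T) + cutWeight c (S ∪ T) ≤ cutWeight c S + cutWeight c T := by
  rw [cut_eq, cut_eq, cut_eq, cut_eq, ← Finset.sum_add_distrib, ← Finset.sum_add_distrib]
  refine Finset.sum_le_sum (fun u _ => ?_)
  rw [← Finset.sum_add_distrib, ← Finset.sum_add_distrib]
  refine Finset.sum_le_sum (fun v _ => ?_)
  by_cases hus : u ∈ S <;> by_cases hut : u ∈ T <;> by_cases hvs : v ∈ S <;>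
    by_cases hvt : v ∈ T <;>
    simp [Finset.mem_inter, Finset.mem_union, hus, hut, hvs, hvt, hc u v]

/-- The set `X ∪ A` is a "new" cut: nonempty, proper, and distinct from `X, Xᶜ, Y, Yᶜ`. -/
lemma new_cut {V : Type*} [Fintype V] [DecidableEq V] (X Y A B : Finset V)
    (_hXY : X ⊂ Y) (hA : A.Nonempty) (hB : B.Nonempty) (hd : Disjoint A B)
    (hU : A ∪ B = Y \ X) :
    (X ∪ A).Nonempty ∧ (X ∪ A)ᶜ.Nonempty ∧ X ∪ A ≠ X ∧ X ∪ A ≠ Xᶜ ∧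
      X ∪ A ≠ Y ∧ X ∪ A ≠ Yᶜ := by
  obtain ⟨a, ha⟩ := hA
  obtain ⟨b, hb⟩ := hB
  have haYX : a ∈ Y \ X := by rw [← hU]; exact Finset.mem_union_left _ ha
  have hbYX : b ∈ Y \ X := by rw [← hU]; exact Finset.mem_union_right _ hb
  have haY : a ∈ Y := (Finset.mem_sdiff.mp haYX).1
  have haX : a ∉ X := (Finset.mem_sdiff.mp haYX).2
  have hbY : b ∈ Y := (Finset.mem_sdiff.mp hbYX).1
  have hbX : b ∉ X := (Finset.mem_sdiff.mp hbYX).2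
  have hbA : b ∉ A := fun h => (Finset.disjoint_left.mp hd h) hb
  have hbZ : b ∉ X ∪ A := by simp [hbX, hbA]
  have haZ : a ∈ X ∪ A := Finset.mem_union_right _ ha
  refine ⟨⟨a, haZ⟩, ⟨b, Finset.mem_compl.mpr hbZ⟩, ?_, ?_, ?_, ?_⟩
  · intro h; exact haX (h ▸ haZ)
  · intro h
    exact hbZ (h ▸ Finset.mem_compl.mpr hbX)
  · intro h; exact hbZ (h ▸ hbY)
  · intro h
    exact Finset.mem_compl.mp (h ▸ haZ) haY

/-- For nested cuts `X ⊂ Y` with `|Y \ X| ≥ 2`, splitting `Y \ X` into nonempty parts `A`,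
`B` shows, via submodularity, that one of `cut(X ∪ A)`, `cut(X ∪ B)` is at least `cut X`
whenever `cut X = cut Y`; hence no nonnegative weights make `X` and `Y` the two unique
strict maximum cuts. -/
theorem stmt_7 {V : Type*} [Fintype V] [DecidableEq V]
    (X Y : Finset V) (hXY : X ⊂ Y) (hdiff : 2 ≤ (Y \ X).card) :
    (∀ A B : Finset V, A.Nonempty → B.Nonempty → Disjoint A B → A ∪ B = Y \ X →
      ∀ c : V → V → ℝ, (∀ u v, 0 ≤ c u v) → (∀ u v, c u v = c v u) → (∀ v, c v v = 0) →
        cutWeight c X = cutWeight c Y →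
        cutWeight c X ≤ cutWeight c (X ∪ A) ∨ cutWeight c X ≤ cutWeight c (X ∪ B)) ∧
    ¬ ∃ c : V → V → ℝ,
        (∀ u v, 0 ≤ c u v) ∧ (∀ u v, c u v = c v u) ∧ (∀ v, c v v = 0) ∧
        cutWeight c X = cutWeight c Y ∧
        ∀ Z : Finset V, Z.Nonempty → Zᶜ.Nonempty →
          Z ≠ X → Z ≠ Xᶜ → Z ≠ Y → Z ≠ Yᶜ → cutWeight c Z < cutWeight c X := by
  have main : ∀ A B : Finset V, A.Nonempty → B.Nonempty → Disjoint A B → A ∪ B = Y \ X →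
      ∀ c : V → V → ℝ, (∀ u v, 0 ≤ c u v) → (∀ u v, c u v = c v u) → (∀ v, c v v = 0) →
        cutWeight c X = cutWeight c Y →
        cutWeight c X ≤ cutWeight c (X ∪ A) ∨ cutWeight c X ≤ cutWeight c (X ∪ B) := by
    intro A B hA hB hd hU c hc _ _ heq
    have hXsubY : X ⊆ Y := hXY.subset
    have hAX : Disjoint A X := by
      rw [Finset.disjoint_left]
      intro x hx
      have : x ∈ Y \ X := by rw [← hU]; exact Finset.mem_union_left _ hx
      exact (Finset.mem_sdiff.mp this).2
    have hBX : Disjoint B X := by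
      rw [Finset.disjoint_left]
      intro x hx
      have : x ∈ Y \ X := by rw [← hU]; exact Finset.mem_union_right _ hx
      exact (Finset.mem_sdiff.mp this).2
    have hinter : (X ∪ A) ∩ (X ∪ B) = X := by
      rw [← Finset.union_inter_distrib_left, (Finset.disjoint_iff_inter_eq_empty.mp hd)]
      simp
    have hunion : (X ∪ A) ∪ (X ∪ B) = Y := by
      rw [Finset.union_union_union_comm, Finset.union_self, hU, Finset.union_sdiff_of_subset hXsubY]
    have := cut_submod c hc (X ∪ A) (X ∪ B)
    rw [hinter, hunion, ← heq] at this
    by_contra h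
    push_neg at h
    linarith [h.1, h.2]
  refine ⟨main, ?_⟩
  rintro ⟨c, hc, hsymm, hdiag, heq, hmax⟩
  obtain ⟨a, ha⟩ := Finset.card_pos.mp (by omega : 0 < (Y \ X).card)
  let A : Finset V := {a}
  let B : Finset V := (Y \ X).erase a
  have hAdef : A = {a} := rfl
  have hBdef : B = (Y \ X).erase a := rfl
  have hA : A.Nonempty := Finset.singleton_nonempty a
  have hB : B.Nonempty := by
    rw [← Finset.card_pos, hBdef, Finset.card_erase_of_mem ha]
    omega
  have hd : Disjoint A B := by
    rw [Finset.disjoint_left]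
    intro x hx
    rw [hAdef, Finset.mem_singleton] at hx
    rw [hBdef, hx]
    exact Finset.notMem_erase a _
  have hU : A ∪ B = Y \ X := by
    rw [hAdef, hBdef, ← Finset.insert_eq, Finset.insert_erase ha]
  obtain ⟨hn1, hn2, h1, h2, h3, h4⟩ := new_cut X Y A B hXY hA hB hd hU
  obtain ⟨hn1', hn2', h1', h2', h3', h4'⟩ := new_cut X Y B A hXY hB hA hd.symm
    (by rw [Finset.union_comm]; exact hU)
  rcases main A B hA hB hd hU c hc hsymm hdiag heq with h | h
  · exact absurd h (not_le.mpr (hmax _ hn1 hn2 h1 h2 h3 h4))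
  · exact absurd h (not_le.mpr (hmax _ hn1' hn2' h1' h2' h3' h4'))
end

section
/- Let V be a finite set with |V| = n and X ⊆ V a cut of cardinality k = min(|X|, n−|X|) ≥ 2. Then the number of cuts Y ∉ {X, V\X} that are either crossing with X or satisfy min over representatives of |X △ Y| = 1 equals 2^{n−1} − 2^k − 2^{n−k} + 2 + n. (This is the degree of K⁺_max(X) in the cone-partition graph for the max-cut problem.) -/
instance {V : Type*} [Fintype V] [DecidableEq V] (A : Finset V) :
    DecidablePred (Crossing A) := fun _ => by unfold Crossing; infer_instance

def cutPair {V : Type*} [Fintype V] [DecidableEq V] (S : Finset V) : Finset (Finset V) :=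
  {S, Sᶜ}

namespace Stmt13Aux

open Finset

variable {V : Type*} [Fintype V] [DecidableEq V]

lemma card_symmDiff (X Y : Finset V) :
    (symmDiff X Y).card = (X \ Y).card + (Y \ X).card := by
  rw [symmDiff_def]; exact Finset.card_union_of_disjoint disjoint_sdiff_sdiff

lemma compl_symmDiff' (X Y : Finset V) : (symmDiff X Y)ᶜ = symmDiff X Yᶜ := by
  ext a; simp only [Finset.mem_compl, Finset.mem_symmDiff]; tauto

lemma crossing_compl (X Y : Finset V) : Crossing X Yᶜ ↔ Crossing X Y := by
  unfold Crossing
  have h1 : X ∩ Yᶜ = X \ Y := by ext a; simp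
  have h2 : X \ Yᶜ = X ∩ Y := by ext a; simp
  have h3 : Yᶜ \ X = (X ∪ Y)ᶜ := by ext a; simp; tauto
  have h4 : (X ∪ Yᶜ)ᶜ = Y \ X := by ext a; simp; tauto
  rw [h1, h2, h3, h4]; tauto

lemma sd1_not_crossing (X Y : Finset V) (h : (symmDiff X Y).card = 1) :
    ¬ Crossing X Y := by
  rintro ⟨-, h2, h3, -⟩
  rw [card_symmDiff] at h
  have := Finset.card_pos.2 h2
  have := Finset.card_pos.2 h3
  omega

lemma inter_empty_iff (X Y : Finset V) : X ∩ Y = ∅ ↔ Y ⊆ Xᶜ := by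
  rw [Finset.eq_empty_iff_forall_notMem]
  simp only [Finset.mem_inter, Finset.subset_iff, Finset.mem_compl, not_and]
  exact forall_congr' fun a => by tauto

lemma union_compl_empty_iff (X Y : Finset V) : (X ∪ Y)ᶜ = ∅ ↔ Xᶜ ⊆ Y := by
  rw [Finset.compl_eq_empty_iff, Finset.eq_univ_iff_forall]
  simp only [Finset.mem_union, Finset.subset_iff, Finset.mem_compl]
  exact forall_congr' fun a => by tauto

lemma not_crossing_iff (X Y : Finset V) :
    ¬ Crossing X Y ↔ (Y ⊆ X ∨ Xᶜ ⊆ Y) ∨ (X ⊆ Y ∨ Y ⊆ Xᶜ) := by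
  unfold Crossing
  simp only [not_and_or, Finset.not_nonempty_iff_eq_empty, inter_empty_iff,
    union_compl_empty_iff, Finset.sdiff_eq_empty_iff_subset]
  tauto

lemma card_image_cutPair (s : Finset (Finset V)) (hcl : ∀ Y ∈ s, Yᶜ ∈ s)
    (hne : ∀ Y ∈ s, Y ≠ Yᶜ) : (s.image cutPair).card * 2 = s.card := by
  rw [Finset.card_eq_sum_card_image cutPair s]
  refine (Finset.sum_const_nat fun b hb => ?_).symm
  obtain ⟨Y, hYs, rfl⟩ := Finset.mem_image.1 hb
  have hfib : s.filter (fun a => cutPair a = cutPair Y) = {Y, Yᶜ} := by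
    ext Z
    simp only [Finset.mem_filter, Finset.mem_insert, Finset.mem_singleton]
    constructor
    · rintro ⟨hZs, hZ⟩
      have hZ' : Z ∈ cutPair Z := by simp [cutPair]
      rw [hZ] at hZ'
      simpa [cutPair] using hZ'
    · rintro (rfl | rfl)
      · exact ⟨hYs, rfl⟩
      · refine ⟨hcl Y hYs, ?_⟩
        unfold cutPair
        rw [compl_compl, Finset.pair_comm]
  rw [hfib, Finset.card_insert_of_notMem (by simpa using hne Y hYs),
    Finset.card_singleton]

lemma card_filter_subset (X : Finset V) :
    (univ.filter (fun Y => Y ⊆ X)).card = 2 ^ X.card := by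
  rw [show univ.filter (fun Y : Finset V => Y ⊆ X) = X.powerset by ext Y; simp]
  exact Finset.card_powerset X

lemma card_filter_supset (X : Finset V) :
    (univ.filter (fun Y => X ⊆ Y)).card = 2 ^ Xᶜ.card := by
  have himg : univ.filter (fun Y : Finset V => X ⊆ Y) = Xᶜ.powerset.image compl := by
    ext Y
    simp only [Finset.mem_filter, Finset.mem_univ, true_and, Finset.mem_image,
      Finset.mem_powerset]
    constructor
    · intro h
      refine ⟨Yᶜ, ?_, compl_compl Y⟩
      intro a ha
      simp only [Finset.mem_compl] at ha ⊢
      exact fun hX => ha (h hX)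
    · rintro ⟨Z, hZ, rfl⟩
      intro a ha
      simp only [Finset.mem_compl]
      intro haZ
      exact absurd ha (by simpa using hZ haZ)
  rw [himg, Finset.card_image_of_injective _ compl_injective, Finset.card_powerset]

end Stmt13Aux

open Finset Stmt13Aux in
/-- The degree of `K⁺_max(X)` in the cone-partition graph for the max-cut problem: for a
cut `X` of cut cardinality `k = min(|X|, n - |X|) ≥ 2`, the number of cuts other than
`{X, V \ X}` that are crossing with `X` or differ from `X` (up to complementation) in
exactly one element equals `2 ^ (n - 1) - 2 ^ k - 2 ^ (n - k) + 2 + n`. -/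
theorem stmt_13 {V : Type*} [Fintype V] [DecidableEq V] (X : Finset V) (k : ℕ)
    (hk : k = min X.card (Fintype.card V - X.card)) (hk2 : 2 ≤ k) :
    ((Finset.univ.filter fun Y : Finset V =>
        Y.Nonempty ∧ Yᶜ.Nonempty ∧ Y ≠ X ∧ Y ≠ Xᶜ ∧
          (Crossing X Y ∨ (symmDiff X Y).card = 1 ∨ (symmDiff X Yᶜ).card = 1)
      ).image cutPair).card
      = 2 ^ (Fintype.card V - 1) - 2 ^ k - 2 ^ (Fintype.card V - k) + 2 + Fintype.card V := by
  classical
  have hxk : k ≤ X.card := by rw [hk]; exact min_le_left _ _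
  have hxk' : k ≤ Fintype.card V - X.card := by rw [hk]; exact min_le_right _ _
  have hx2 : 2 ≤ X.card := hk2.trans hxk
  have hsum : X.card + Xᶜ.card = Fintype.card V := Finset.card_add_card_compl X
  have hcc : Xᶜ.card = Fintype.card V - X.card := Finset.card_compl X
  have hc2 : 2 ≤ Xᶜ.card := by omega
  have hn4 : 4 ≤ Fintype.card V := by omega
  set F := (Finset.univ.filter fun Y : Finset V =>
        Y.Nonempty ∧ Yᶜ.Nonempty ∧ Y ≠ X ∧ Y ≠ Xᶜ ∧
          (Crossing X Y ∨ (symmDiff X Y).card = 1 ∨ (symmDiff X Yᶜ).card = 1)) with hFdef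
  -- F is closed under complement
  have hcl : ∀ Y ∈ F, Yᶜ ∈ F := by
    intro Y hY
    rw [hFdef, Finset.mem_filter] at hY ⊢
    obtain ⟨-, h1, h2, h3, h4, h5⟩ := hY
    refine ⟨Finset.mem_univ _, h2, by rwa [compl_compl], ?_, ?_, ?_⟩
    · intro he; exact h4 (by rw [← compl_compl Y, he])
    · intro he; exact h3 (by rw [← compl_compl Y, he, compl_compl])
    · rcases h5 with h | h | h
      · exact Or.inl ((crossing_compl X Y).2 h)
      · exact Or.inr (Or.inr (by rwa [compl_compl]))
      · exact Or.inr (Or.inl h)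
  have hne : ∀ Y ∈ F, Y ≠ Yᶜ := by
    intro Y hY
    rw [hFdef, Finset.mem_filter] at hY
    obtain ⟨a, ha⟩ := hY.2.1
    intro he
    have : a ∈ Yᶜ := he ▸ ha
    simp [ha] at this
  have h2to1 : (F.image cutPair).card * 2 = F.card := card_image_cutPair F hcl hne
  -- the three pieces
  set C := univ.filter (fun Y : Finset V => Crossing X Y) with hCdef
  set S1 := univ.filter (fun Y : Finset V => (symmDiff X Y).card = 1) with hS1def
  set S2 := univ.filter (fun Y : Finset V => (symmDiff X Yᶜ).card = 1) with hS2def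
  have sd1_side : ∀ Y : Finset V, (symmDiff X Y).card = 1 →
      Y.Nonempty ∧ Yᶜ.Nonempty ∧ Y ≠ X ∧ Y ≠ Xᶜ := by
    intro Y h
    refine ⟨?_, ?_, ?_, ?_⟩
    · rcases Finset.eq_empty_or_nonempty Y with rfl | h'
      · rw [show symmDiff X (∅ : Finset V) = X by simp] at h; omega
      · exact h'
    · rcases Finset.eq_empty_or_nonempty Yᶜ with hY | h'
      · rw [Finset.compl_eq_empty_iff] at hY
        subst hY
        rw [show symmDiff X (univ : Finset V) = Xᶜ from symmDiff_top X] at h; omega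
      · exact h'
    · rintro rfl; simp [symmDiff_self] at h
    · rintro rfl
      rw [show symmDiff X Xᶜ = (univ : Finset V) by simp, Finset.card_univ] at h
      omega
  have hFdecomp : F = C ∪ S1 ∪ S2 := by
    ext Y
    rw [hFdef, hCdef, hS1def, hS2def]
    simp only [Finset.mem_union, Finset.mem_filter, Finset.mem_univ, true_and]
    constructor
    · rintro ⟨-, -, -, -, h⟩; tauto
    · rintro ((h | h) | h)
      · obtain ⟨h1, h2, h3, h4⟩ := h
        refine ⟨?_, ?_, ?_, ?_, Or.inl ⟨h1, h2, h3, h4⟩⟩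
        · obtain ⟨a, ha⟩ := h1
          exact ⟨a, (Finset.mem_inter.1 ha).2⟩
        · obtain ⟨a, ha⟩ := h4
          simp only [Finset.mem_compl, Finset.mem_union] at ha
          exact ⟨a, by simp [Finset.mem_compl]; tauto⟩
        · rintro rfl; simp at h3
        · rintro rfl; simp at h1
      · obtain ⟨e1, e2, e3, e4⟩ := sd1_side Y h
        exact ⟨e1, e2, e3, e4, Or.inr (Or.inl h)⟩
      · obtain ⟨e1, e2, e3, e4⟩ := sd1_side Yᶜ h
        refine ⟨by rwa [compl_compl] at e2, e1, ?_, ?_, Or.inr (Or.inr h)⟩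
        · intro he; exact e4 (by rw [he])
        · intro he; exact e3 (by rw [he, compl_compl])
  -- disjointness
  have hd1 : Disjoint C S1 := by
    rw [Finset.disjoint_left]
    intro Y hY hY1
    rw [hCdef, Finset.mem_filter] at hY
    rw [hS1def, Finset.mem_filter] at hY1
    exact sd1_not_crossing X Y hY1.2 hY.2
  have hd2 : Disjoint C S2 := by
    rw [Finset.disjoint_left]
    intro Y hY hY1
    rw [hCdef, Finset.mem_filter] at hY
    rw [hS2def, Finset.mem_filter] at hY1
    exact sd1_not_crossing X Yᶜ hY1.2 ((crossing_compl X Y).2 hY.2)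
  have hd12 : Disjoint S1 S2 := by
    rw [Finset.disjoint_left]
    intro Y hY hY1
    rw [hS1def, Finset.mem_filter] at hY
    rw [hS2def, Finset.mem_filter] at hY1
    have hsum2 := Finset.card_add_card_compl (symmDiff X Y)
    rw [compl_symmDiff'] at hsum2
    omega
  -- cardinalities of S1 and S2
  have cardS1 : S1.card = Fintype.card V := by
    have himg : S1 = univ.image (fun a : V => symmDiff X {a}) := by
      ext Y
      rw [hS1def]
      simp only [Finset.mem_filter, Finset.mem_univ, true_and, Finset.mem_image]
      constructor
      · intro h
        obtain ⟨a, ha⟩ := Finset.card_eq_one.1 h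
        exact ⟨a, by rw [← ha, symmDiff_symmDiff_cancel_left]⟩
      · rintro ⟨a, rfl⟩
        rw [symmDiff_symmDiff_cancel_left]
        exact Finset.card_singleton a
    have hinj : Function.Injective (fun a : V => symmDiff X {a}) := fun a b hab =>
      Finset.singleton_injective (symmDiff_right_injective X hab)
    rw [himg, Finset.card_image_of_injective _ hinj, Finset.card_univ]
  have cardS2 : S2.card = Fintype.card V := by
    have himg : S2 = univ.image (fun a : V => (symmDiff X {a})ᶜ) := by
      ext Y
      rw [hS2def]
      simp only [Finset.mem_filter, Finset.mem_univ, true_and, Finset.mem_image]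
      constructor
      · intro h
        obtain ⟨a, ha⟩ := Finset.card_eq_one.1 h
        exact ⟨a, by rw [← ha, symmDiff_symmDiff_cancel_left, compl_compl]⟩
      · rintro ⟨a, rfl⟩
        rw [compl_compl, symmDiff_symmDiff_cancel_left]
        exact Finset.card_singleton a
    have hinj : Function.Injective (fun a : V => (symmDiff X {a})ᶜ) := fun a b hab =>
      Finset.singleton_injective (symmDiff_right_injective X (compl_injective hab))
    rw [himg, Finset.card_image_of_injective _ hinj, Finset.card_univ]
  have hFcard : F.card = C.card + (Fintype.card V + Fintype.card V) := by
    rw [hFdecomp, Finset.card_union_of_disjoint (Finset.disjoint_union_left.2 ⟨hd2, hd12⟩),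
      Finset.card_union_of_disjoint hd1, cardS1, cardS2, add_assoc]
  -- counting the crossing sets via the complement
  set A1 := univ.filter (fun Y : Finset V => Y ⊆ X ∨ Xᶜ ⊆ Y) with hA1def
  set A2 := univ.filter (fun Y : Finset V => X ⊆ Y ∨ Y ⊆ Xᶜ) with hA2def
  have hCNC : C.card + (A1 ∪ A2).card = 2 ^ Fintype.card V := by
    have hNC : univ.filter (fun Y : Finset V => ¬ Crossing X Y) = A1 ∪ A2 := by
      ext Y
      rw [hA1def, hA2def]
      simp only [Finset.mem_union, Finset.mem_filter, Finset.mem_univ, true_and,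
        not_crossing_iff]
    rw [← hNC, hCdef, Finset.card_filter_add_card_filter_not, Finset.card_univ,
      Fintype.card_finset]
  have hXne : X.Nonempty := Finset.card_pos.1 (by omega)
  have hXcne : Xᶜ.Nonempty := Finset.card_pos.1 (by omega)
  have hA1 : A1.card = 2 ^ X.card + 2 ^ X.card := by
    have hdis : Disjoint (univ.filter (fun Y : Finset V => Y ⊆ X))
        (univ.filter (fun Y : Finset V => Xᶜ ⊆ Y)) := by
      rw [Finset.disjoint_left]
      intro Y hY hY'
      rw [Finset.mem_filter] at hY hY'
      obtain ⟨a, ha⟩ := hXcne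
      have : a ∈ X := hY.2 (hY'.2 ha)
      simp [this] at ha
    rw [hA1def, Finset.filter_or, Finset.card_union_of_disjoint hdis,
      card_filter_subset, card_filter_supset, compl_compl]
  have hA2 : A2.card = 2 ^ Xᶜ.card + 2 ^ Xᶜ.card := by
    have hdis : Disjoint (univ.filter (fun Y : Finset V => X ⊆ Y))
        (univ.filter (fun Y : Finset V => Y ⊆ Xᶜ)) := by
      rw [Finset.disjoint_left]
      intro Y hY hY'
      rw [Finset.mem_filter] at hY hY'
      obtain ⟨a, ha⟩ := hXne
      have : a ∈ Xᶜ := hY'.2 (hY.2 ha)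
      simp [ha] at this
    rw [hA2def, Finset.filter_or, Finset.card_union_of_disjoint hdis,
      card_filter_supset, card_filter_subset]
  have hX_ne_compl : X ≠ Xᶜ := by
    obtain ⟨a, ha⟩ := hXne
    intro he
    have : a ∈ Xᶜ := he ▸ ha
    simp [ha] at this
  have hInter : A1 ∩ A2 = ({∅, Finset.univ, X, Xᶜ} : Finset (Finset V)) := by
    ext Y
    rw [hA1def, hA2def]
    simp only [Finset.mem_inter, Finset.mem_filter, Finset.mem_univ, true_and,
      Finset.mem_insert, Finset.mem_singleton]
    constructor
    · rintro ⟨h1 | h1, h2 | h2⟩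
      · exact Or.inr (Or.inr (Or.inl (Finset.Subset.antisymm h1 h2)))
      · refine Or.inl (Finset.eq_empty_iff_forall_notMem.2 fun a ha => ?_)
        have := h2 ha
        simp [h1 ha] at this
      · refine Or.inr (Or.inl (Finset.eq_univ_iff_forall.2 fun a => ?_))
        by_cases haX : a ∈ X
        · exact h2 haX
        · exact h1 (Finset.mem_compl.2 haX)
      · exact Or.inr (Or.inr (Or.inr (Finset.Subset.antisymm h2 h1)))
    · rintro (rfl | rfl | rfl | rfl)
      · exact ⟨Or.inl (Finset.empty_subset X), Or.inr (Finset.empty_subset Xᶜ)⟩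
      · exact ⟨Or.inr (Finset.subset_univ Xᶜ), Or.inl (Finset.subset_univ X)⟩
      · exact ⟨Or.inl Finset.Subset.rfl, Or.inl Finset.Subset.rfl⟩
      · exact ⟨Or.inr Finset.Subset.rfl, Or.inr Finset.Subset.rfl⟩
  have hInterCard : (A1 ∩ A2).card = 4 := by
    rw [hInter]
    have h1 : (∅ : Finset V) ≠ Finset.univ := by
      intro he
      have := Finset.card_univ (α := V)
      rw [← he, Finset.card_empty] at this
      omega
    have h2 : (∅ : Finset V) ≠ X := fun he => by
      have := hx2; rw [← he, Finset.card_empty] at this; omega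
    have h3 : (∅ : Finset V) ≠ Xᶜ := fun he => by
      have := hc2; rw [← he, Finset.card_empty] at this; omega
    have h4 : (Finset.univ : Finset V) ≠ X := fun he => by
      have : X.card = Fintype.card V := by rw [← he, Finset.card_univ]
      omega
    have h5 : (Finset.univ : Finset V) ≠ Xᶜ := fun he => by
      have : Xᶜ.card = Fintype.card V := by rw [← he, Finset.card_univ]
      omega
    rw [Finset.card_insert_of_notMem (by simp [h1, h2, h3]),
      Finset.card_insert_of_notMem (by simp [h4, h5]),
      Finset.card_insert_of_notMem (by simp [hX_ne_compl]),
      Finset.card_singleton]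
  have hUnion : (A1 ∪ A2).card + (A1 ∩ A2).card = A1.card + A2.card :=
    Finset.card_union_add_card_inter A1 A2
  -- final arithmetic
  have hkpow : 2 ^ k + 2 ^ (Fintype.card V - k) = 2 ^ X.card + 2 ^ Xᶜ.card := by
    rcases Nat.le_total X.card (Fintype.card V - X.card) with h | h
    · have hk1 : k = X.card := by rw [hk]; exact min_eq_left h
      rw [hk1, show Fintype.card V - X.card = Xᶜ.card by omega]
    · have hk1 : k = Xᶜ.card := by rw [hk, hcc]; exact min_eq_right h
      rw [hk1, show Fintype.card V - Xᶜ.card = X.card by omega]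
      omega
  have hkn : k ≤ Fintype.card V - k := by omega
  have hineq1 : 2 ^ k ≤ 2 ^ (Fintype.card V - k) :=
    Nat.pow_le_pow_right (by norm_num) hkn
  have hineq2 : 2 ^ (Fintype.card V - k) * 2 ≤ 2 ^ (Fintype.card V - 1) := by
    have h : (2:ℕ) ^ (Fintype.card V - k + 1) ≤ 2 ^ (Fintype.card V - 1) :=
      Nat.pow_le_pow_right (by norm_num) (by omega)
    rwa [pow_succ] at h
  have hn2 : 2 ^ (Fintype.card V - 1) * 2 = 2 ^ Fintype.card V := by
    have he : Fintype.card V - 1 + 1 = Fintype.card V := by omega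
    rw [← pow_succ, he]
  omega
end
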